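/- arXiv:1805.04946 — 4 statements merged into one kernel-verified Lean document; each statement's English description precedes it below -/
import Mathlib

section
/- Let d ≥ 1 and C > 0. There exist constants C' > 0 and θ_0 > 0 such that for every θ ∈ (0, θ_0] and every unit vector q̂ ∈ R^d, the set D_θ := {x ∈ R^d : |x| ≤ 1 and ⟨x − q̂, q̂⟩ ≥ −Cθ|x − q̂|} has Lebesgue measure |D_θ| ≤ C' θ^{d+1}. -/
open MeasureTheory Metric Set
open scoped RealInnerProductSpace

/-! For `‖x‖ ≤ 1` and `y = x - q̂` one has `⟪y, q̂⟫ ≤ -‖y‖² / 2`; together with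
`⟪y, q̂⟫ ≥ -Cθ‖y‖` this forces `‖y‖ ≤ 2Cθ` and `|⟪y, q̂⟫| ≤ 2C²θ²`. So `D_θ - q̂` lies in a box
of side `O(θ²)` along `q̂` and `O(θ)` in the `d - 1` orthogonal directions of an orthonormal
frame starting with `q̂`, whose volume is `O(θ^(d+1))`. -/

theorem volume_euclideanSpace_abs_apply_zero_le_and_norm_le (n : ℕ) {a r : ℝ} (ha : 0 ≤ a)
    (hr : 0 ≤ r) :
    volume {z : EuclideanSpace ℝ (Fin (n + 1)) | |z 0| ≤ a ∧ ‖z‖ ≤ r} ≤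
      ENNReal.ofReal (2 * a * (2 * r) ^ n) := by
  set box : Fin (n + 1) → Set ℝ := Fin.cons (Icc (-a) a) fun _ => Icc (-r) r
  have hsub : {z : EuclideanSpace ℝ (Fin (n + 1)) | |z 0| ≤ a ∧ ‖z‖ ≤ r} ⊆
      WithLp.ofLp ⁻¹' univ.pi box := by
    rintro z ⟨h0, hzr⟩ i -
    refine Fin.cases ?_ (fun j => ?_) i
    · exact abs_le.mp h0
    · exact abs_le.mp ((PiLp.norm_apply_le z j.succ).trans hzr)
  have hbox : MeasurableSet (univ.pi box) :=
    MeasurableSet.univ_pi fun i => Fin.cases measurableSet_Icc (fun _ => measurableSet_Icc) i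
  calc volume {z : EuclideanSpace ℝ (Fin (n + 1)) | |z 0| ≤ a ∧ ‖z‖ ≤ r}
      ≤ volume (WithLp.ofLp ⁻¹' univ.pi box) := measure_mono hsub
    _ = ∏ i, volume (box i) := by
      rw [(PiLp.volume_preserving_ofLp _).measure_preimage hbox.nullMeasurableSet, volume_pi_pi]
    _ = ENNReal.ofReal (2 * a * (2 * r) ^ n) := by
      simp [box, Fin.prod_univ_succ, Real.volume_Icc, two_mul, ENNReal.ofReal_mul,
        ENNReal.ofReal_pow, ha, hr]

section
variable {E : Type*} [NormedAddCommGroup E] [InnerProductSpace ℝ E]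

theorem inner_sub_le_neg_norm_sub_sq_div_two {x q : E} (hx : ‖x‖ ≤ 1) (hq : ‖q‖ = 1) :
    ⟪x - q, q⟫ ≤ -(‖x - q‖ ^ 2) / 2 := by
  have h : ‖x‖ ^ 2 = ‖x - q‖ ^ 2 + 2 * ⟪x - q, q⟫ + 1 := by
    rw [← sub_add_cancel x q, norm_add_sq_real, hq, add_sub_cancel_right]; ring
  nlinarith [norm_nonneg x]

theorem abs_inner_sub_le_and_norm_sub_le {x q : E} {c : ℝ} (hc : 0 ≤ c) (hx : ‖x‖ ≤ 1)
    (hq : ‖q‖ = 1) (h : -(c * ‖x - q‖) ≤ ⟪x - q, q⟫) :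
    |⟪x - q, q⟫| ≤ 2 * c ^ 2 ∧ ‖x - q‖ ≤ 2 * c := by
  have hcap := inner_sub_le_neg_norm_sub_sq_div_two hx hq
  have hnorm : ‖x - q‖ ≤ 2 * c := by
    rcases (norm_nonneg (x - q)).eq_or_lt with h0 | hpos
    · rw [← h0]; positivity
    · nlinarith
  exact ⟨abs_le.mpr ⟨by nlinarith, by nlinarith [norm_nonneg (x - q)]⟩, hnorm⟩

variable [FiniteDimensional ℝ E] {n : ℕ}

theorem exists_orthonormalBasis_apply_zero_eq (hE : Module.finrank ℝ E = n + 1) {q : E}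
    (hq : ‖q‖ = 1) : ∃ b : OrthonormalBasis (Fin (n + 1)) ℝ E, b 0 = q := by
  have hv : Orthonormal ℝ (({0} : Set (Fin (n + 1))).domRestrict fun _ => q) := by
    rw [orthonormal_iff_ite]
    rintro ⟨i, rfl⟩ ⟨j, rfl⟩
    simp [Set.domRestrict, hq]
  obtain ⟨b, hb⟩ := hv.exists_orthonormalBasis_extension_of_card_eq (by simpa using hE)
  exact ⟨b, hb 0 rfl⟩

variable [MeasurableSpace E] [BorelSpace E]

theorem volume_abs_inner_le_and_norm_le (hE : Module.finrank ℝ E = n + 1) {q : E}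
    (hq : ‖q‖ = 1) {a r : ℝ} (ha : 0 ≤ a) (hr : 0 ≤ r) :
    volume {y : E | |⟪y, q⟫| ≤ a ∧ ‖y‖ ≤ r} ≤ ENNReal.ofReal (2 * a * (2 * r) ^ n) := by
  obtain ⟨b, hb⟩ := exists_orthonormalBasis_apply_zero_eq hE hq
  have hset : {y : E | |⟪y, q⟫| ≤ a ∧ ‖y‖ ≤ r} =
      b.measurableEquiv ⁻¹' {z | |z 0| ≤ a ∧ ‖z‖ ≤ r} := by
    ext y
    change _ ↔ |b.repr y 0| ≤ a ∧ ‖b.repr y‖ ≤ r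
    rw [b.repr_apply_apply, hb, real_inner_comm, LinearIsometryEquiv.norm_map]
    rfl
  rw [hset, b.measurePreserving_measurableEquiv.measure_preimage_equiv]
  exact volume_euclideanSpace_abs_apply_zero_le_and_norm_le n ha hr

theorem volume_norm_le_one_and_neg_mul_norm_sub_le_inner_le (hE : Module.finrank ℝ E = n + 1)
    {q : E} (hq : ‖q‖ = 1) {c : ℝ} (hc : 0 ≤ c) :
    volume {x : E | ‖x‖ ≤ 1 ∧ -(c * ‖x - q‖) ≤ ⟪x - q, q⟫} ≤
      ENNReal.ofReal (4 * c ^ 2 * (4 * c) ^ n) := by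
  have hsub : {x : E | ‖x‖ ≤ 1 ∧ -(c * ‖x - q‖) ≤ ⟪x - q, q⟫} ⊆
      (· + -q) ⁻¹' {y | |⟪y, q⟫| ≤ 2 * c ^ 2 ∧ ‖y‖ ≤ 2 * c} := by
    rintro x ⟨hx, h⟩
    rw [mem_preimage, ← sub_eq_add_neg]
    exact abs_inner_sub_le_and_norm_sub_le hc hx hq h
  calc _ ≤ volume ((· + -q) ⁻¹' {y : E | |⟪y, q⟫| ≤ 2 * c ^ 2 ∧ ‖y‖ ≤ 2 * c}) :=
        measure_mono hsub
    _ = volume {y : E | |⟪y, q⟫| ≤ 2 * c ^ 2 ∧ ‖y‖ ≤ 2 * c} := measure_preimage_add_right _ _ _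
    _ ≤ ENNReal.ofReal (2 * (2 * c ^ 2) * (2 * (2 * c)) ^ n) :=
        volume_abs_inner_le_and_norm_le hE hq (by positivity) (by positivity)
    _ = ENNReal.ofReal (4 * c ^ 2 * (4 * c) ^ n) := by ring_nf

end

/-- The set `D_θ = {x : |x| ≤ 1, ⟨x − q̂, q̂⟩ ≥ −Cθ|x − q̂|}` has Lebesgue
measure at most `C' θ^{d+1}` for all sufficiently small `θ > 0`. -/
theorem stmt10 (d : ℕ) (hd : 1 ≤ d) (C : ℝ) (hC : 0 < C) :
    ∃ C' : ℝ, 0 < C' ∧ ∃ θ₀ : ℝ, 0 < θ₀ ∧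
      ∀ θ : ℝ, θ ∈ Set.Ioc (0 : ℝ) θ₀ →
        ∀ qhat : EuclideanSpace ℝ (Fin d), ‖qhat‖ = 1 →
          volume {x : EuclideanSpace ℝ (Fin d) |
              ‖x‖ ≤ 1 ∧ -(C * θ * ‖x - qhat‖) ≤ ⟪x - qhat, qhat⟫} ≤
            ENNReal.ofReal (C' * θ ^ (d + 1)) := by
  obtain ⟨n, rfl⟩ := Nat.exists_eq_add_of_le' hd
  refine ⟨4 * C ^ 2 * (4 * C) ^ n, by positivity, 1, one_pos, fun θ hθ qhat hq => ?_⟩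
  convert volume_norm_le_one_and_neg_mul_norm_sub_le_inner_le finrank_euclideanSpace_fin hq
    (mul_nonneg hC.le hθ.1.le) using 2
  ring
end

section
/- Let d ≥ 1, let U_d be the uniform measure on the unit ball of R^d, let q̂ ∈ R^d be a unit vector, and let P = p(y)dy be a probability measure on R^d whose density satisfies p ≥ λ almost everywhere on B_1 for some λ > 0. Then there exists no Borel map T : R^d → R^d pushing P forward to U_d such that ⟨T(y) − q̂, y⟩ ≥ 0 for P-a.e. y ∈ R^d. -/
open MeasureTheory Metric Set
open scoped ENNReal RealInnerProductSpace

/-- The surface area `H^{d-1}(S^{d-1})` of the unit sphere in `ℝ^d`. -/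
noncomputable def sphereArea (d : ℕ) : ℝ :=
  (μH[(d : ℝ) - 1] (sphere (0 : EuclideanSpace ℝ (Fin d)) 1)).toReal

/-- The density `u_d(x) = c_d / |x|^{d-1}` with `c_d = 1 / H^{d-1}(S^{d-1})`. -/
noncomputable def uDens (d : ℕ) (x : EuclideanSpace ℝ (Fin d)) : ℝ :=
  (sphereArea d)⁻¹ / ‖x‖ ^ (d - 1)

/-- The "uniform" measure `U_d` on the unit ball, with density `u_d` on `B_1` and `0` outside. -/
noncomputable def unifBall (d : ℕ) : Measure (EuclideanSpace ℝ (Fin d)) :=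
  volume.withDensity
    ((ball (0 : EuclideanSpace ℝ (Fin d)) 1).indicator fun x => ENNReal.ofReal (uDens d x))

/-!
Rotate so that `q̂ = e₀` and write `y = (y₀, y')`. The thin cylinder
`A = {1/2 < y₀ < 3/4, |y'| < δ}` lies in `B_1`, so `P(A) ≥ λ |A| ≈ λ δ^{d-1}`. For `y ∈ A` and
`|T y| < 1`, the condition `⟨T y − e₀, y⟩ ≥ 0` forces `T y` into the short cylinder
`N = {1 − 8δ² ≤ w₀ ≤ 1, |w'| ≤ 4δ}` near the pole, where `|w| ≥ 1/2` bounds `u_d`, so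
`P(A) ≤ U_d(N) ≲ δ^{d+1}`. Hence `λ ≲ δ²`, which fails for small `δ`.
-/

noncomputable def headTailEquiv (m : ℕ) :
    EuclideanSpace ℝ (Fin (m + 1)) ≃ᵐ ℝ × EuclideanSpace ℝ (Fin m) :=
  (MeasurableEquiv.toLp 2 _).symm.trans <|
    (MeasurableEquiv.piFinSuccAbove (fun _ => ℝ) 0).trans <|
      MeasurableEquiv.prodCongr (MeasurableEquiv.refl ℝ) (MeasurableEquiv.toLp 2 _)

namespace headTailEquiv

variable {m : ℕ}

@[simp] lemma snd_apply (v : EuclideanSpace ℝ (Fin (m + 1))) (j : Fin m) :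
    (headTailEquiv m v).2 j = v j.succ := rfl

lemma measurePreserving : MeasurePreserving (headTailEquiv m) :=
  (EuclideanSpace.volume_preserving_symm_measurableEquiv_toLp _).trans <|
    (measurePreserving_piFinSuccAbove (fun _ => volume) 0).trans <|
      (MeasurePreserving.id volume).prod (PiLp.volume_preserving_toLp _)

lemma volume_preimage_prod {I : Set ℝ} {K : Set (EuclideanSpace ℝ (Fin m))}
    (hI : MeasurableSet I) (hK : MeasurableSet K) :
    volume (headTailEquiv m ⁻¹' I ×ˢ K) = volume I * volume K := by
  rw [measurePreserving.measure_preimage (hI.prod hK).nullMeasurableSet, Measure.volume_eq_prod,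
    Measure.prod_prod]

lemma norm_sq_eq (v : EuclideanSpace ℝ (Fin (m + 1))) :
    ‖v‖ ^ 2 = v 0 ^ 2 + ‖(headTailEquiv m v).2‖ ^ 2 := by
  simp only [EuclideanSpace.real_norm_sq_eq, Fin.sum_univ_succ, snd_apply]

lemma inner_eq (v w : EuclideanSpace ℝ (Fin (m + 1))) :
    ⟪v, w⟫ = v 0 * w 0 + ⟪(headTailEquiv m v).2, (headTailEquiv m w).2⟫ := by
  simp only [PiLp.inner_apply, RCLike.inner_apply, conj_trivial, Fin.sum_univ_succ, snd_apply]
  ring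

end headTailEquiv

lemma uDens_le {d : ℕ} {r : ℝ} (hr : 0 < r) {x : EuclideanSpace ℝ (Fin d)} (hx : r ≤ ‖x‖) :
    uDens d x ≤ (sphereArea d)⁻¹ / r ^ (d - 1) :=
  div_le_div_of_nonneg_left (inv_nonneg.2 ENNReal.toReal_nonneg) (by positivity)
    (pow_le_pow_left₀ hr.le hx _)

lemma unifBall_le_mul_volume {d : ℕ} {r : ℝ} (hr : 0 < r) {N : Set (EuclideanSpace ℝ (Fin d))}
    (hN : MeasurableSet N) (hNr : N ⊆ {x | r ≤ ‖x‖}) :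
    unifBall d N ≤ ENNReal.ofReal ((sphereArea d)⁻¹ / r ^ (d - 1)) * volume N := by
  rw [unifBall, withDensity_apply _ hN, ← setLIntegral_const]
  refine setLIntegral_mono measurable_const fun x hx => ?_
  exact (indicator_le_self _ _ x).trans (ENNReal.ofReal_le_ofReal (uDens_le hr (hNr hx)))

lemma ae_mem_ball_unifBall (d : ℕ) : ∀ᵐ x ∂unifBall d, x ∈ ball 0 1 := by
  rw [ae_iff, ← compl_def, unifBall, withDensity_apply _ measurableSet_ball.compl]
  simp [← lintegral_indicator measurableSet_ball.compl, indicator_indicator]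

lemma exists_linearIsometryEquiv_apply_eq_single {ι E : Type*} [Fintype ι] [DecidableEq ι]
    [NormedAddCommGroup E] [InnerProductSpace ℝ E] [FiniteDimensional ℝ E]
    (hcard : Module.finrank ℝ E = Fintype.card ι) (i : ι) {q : E} (hq : ‖q‖ = 1) :
    ∃ e : E ≃ₗᵢ[ℝ] EuclideanSpace ℝ ι, e q = EuclideanSpace.single i 1 := by
  have hon : Orthonormal ℝ (({i} : Set ι).domRestrict fun _ => q) :=
    ⟨fun _ => hq, fun j k hjk => absurd (Subsingleton.elim j k) hjk⟩
  obtain ⟨b, hb⟩ := hon.exists_orthonormalBasis_extension_of_card_eq hcard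
  exact ⟨b.repr, by rw [← hb i rfl, b.repr_self]⟩

lemma measure_le_map_apply_of_ae_mapsTo {α β : Type*} [MeasurableSpace α] [MeasurableSpace β]
    {μ : Measure α} {T : α → β} (hT : Measurable T) {A : Set α} {N : Set β} (hN : MeasurableSet N)
    (h : ∀ᵐ y ∂μ, y ∈ A → T y ∈ N) : μ A ≤ μ.map T N := by
  rw [Measure.map_apply hT hN]
  exact measure_mono_ae h

lemma mul_measure_le_withDensity_apply {α : Type*} [MeasurableSpace α] {μ : Measure α}
    {f : α → ℝ≥0∞} {c : ℝ≥0∞} {s : Set α} (hs : MeasurableSet s)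
    (h : ∀ᵐ x ∂μ, x ∈ s → c ≤ f x) : c * μ s ≤ μ.withDensity f s := by
  rw [withDensity_apply _ hs, ← setLIntegral_const]
  exact setLIntegral_mono_ae' hs h

lemma exists_pos_le_mul_sq_lt {K c r : ℝ} (hK : 0 ≤ K) (hc : 0 < c) (hr : 0 < r) (hr₁ : r ≤ 1) :
    ∃ δ, 0 < δ ∧ δ ≤ r ∧ K * δ ^ 2 < c := by
  obtain ⟨ε, hε, hεc⟩ := exists_pos_mul_lt hc K
  have hδ : 0 < min ε r := lt_min hε hr
  have hsq : min ε r ^ 2 ≤ ε := by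
    nlinarith [min_le_left ε r, min_le_right ε r]
  exact ⟨min ε r, hδ, min_le_right _ _, (mul_le_mul_of_nonneg_left hsq hK).trans_lt hεc⟩

-- `s, a` and `t, b` are the axial and transverse sizes of `w = T y` and of `y`.
lemma cap_bounds {s t a b δ : ℝ} (ht : 1 / 2 < t) (ha : 0 ≤ a) (hb₀ : 0 ≤ b) (hb : b ≤ δ)
    (hunit : s ^ 2 + a ^ 2 ≤ 1) (hmono : t ≤ s * t + a * b) :
    1 - 8 * δ ^ 2 ≤ s ∧ s ≤ 1 ∧ a ≤ 4 * δ := by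
  have hs : s ≤ 1 := by nlinarith
  have hgap : 1 - s ≤ 2 * δ * a := by
    nlinarith [mul_nonneg (sub_nonneg.2 hs) (by linarith : 0 ≤ t - 1 / 2)]
  have hsq : a ^ 2 ≤ 4 * δ * a := by nlinarith
  have ha4 : a ≤ 4 * δ := by nlinarith
  exact ⟨by nlinarith, hs, ha4⟩

def innerCylinder (m : ℕ) (δ : ℝ) : Set (EuclideanSpace ℝ (Fin (m + 1))) :=
  headTailEquiv m ⁻¹' Ioo (1 / 2) (3 / 4) ×ˢ ball 0 δ

def capCylinder (m : ℕ) (δ : ℝ) : Set (EuclideanSpace ℝ (Fin (m + 1))) :=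
  headTailEquiv m ⁻¹' Icc (1 - 8 * δ ^ 2) 1 ×ˢ closedBall 0 (4 * δ)

section Cylinders

variable {m : ℕ} {δ : ℝ}

lemma measurableSet_innerCylinder : MeasurableSet (innerCylinder m δ) :=
  (headTailEquiv m).measurable (measurableSet_Ioo.prod measurableSet_ball)

lemma measurableSet_capCylinder : MeasurableSet (capCylinder m δ) :=
  (headTailEquiv m).measurable (measurableSet_Icc.prod measurableSet_closedBall)

lemma mem_capCylinder_of_inner_sub_single_nonneg {v w : EuclideanSpace ℝ (Fin (m + 1))}
    (hv : v ∈ innerCylinder m δ) (hw : ‖w‖ ≤ 1)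
    (h : 0 ≤ ⟪w - EuclideanSpace.single 0 1, v⟫) : w ∈ capCylinder m δ := by
  obtain ⟨⟨hv₀, -⟩, hv'⟩ := hv
  have hunit : w 0 ^ 2 + ‖(headTailEquiv m w).2‖ ^ 2 ≤ 1 := by
    rw [← headTailEquiv.norm_sq_eq]; nlinarith [norm_nonneg w]
  have hmono : v 0 ≤ w 0 * v 0 + ‖(headTailEquiv m w).2‖ * ‖(headTailEquiv m v).2‖ := by
    rw [inner_sub_left, EuclideanSpace.inner_single_left, headTailEquiv.inner_eq] at h
    simp only [map_one, one_mul] at h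
    nlinarith [real_inner_le_norm (headTailEquiv m w).2 (headTailEquiv m v).2]
  obtain ⟨h₁, h₂, h₃⟩ := cap_bounds hv₀ (norm_nonneg _) (norm_nonneg _)
    (mem_ball_zero_iff.1 hv').le hunit hmono
  exact ⟨⟨h₁, h₂⟩, mem_closedBall_zero_iff.2 h₃⟩

lemma innerCylinder_subset_ball (hδ : δ ≤ 1 / 2) : innerCylinder m δ ⊆ ball 0 1 := by
  rintro v ⟨hv₀, hv'⟩
  obtain ⟨hlo, hhi⟩ : 1 / 2 < v 0 ∧ v 0 < 3 / 4 := hv₀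
  have hv'' := mem_ball_zero_iff.1 hv'
  have hsq := headTailEquiv.norm_sq_eq v
  rw [mem_ball_zero_iff]
  nlinarith [norm_nonneg v, norm_nonneg (headTailEquiv m v).2]

lemma capCylinder_subset_setOf_le_norm (hδ₀ : 0 ≤ δ) (hδ : δ ≤ 1 / 4) :
    capCylinder m δ ⊆ {x | 1 / 2 ≤ ‖x‖} := by
  rintro x ⟨hx₀, -⟩
  obtain ⟨hlo, -⟩ : 1 - 8 * δ ^ 2 ≤ x 0 ∧ x 0 ≤ 1 := hx₀
  have hsq := headTailEquiv.norm_sq_eq x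
  have hhalf : 1 / 2 ≤ x 0 := by nlinarith
  show 1 / 2 ≤ ‖x‖
  nlinarith [norm_nonneg x, sq_nonneg ‖(headTailEquiv m x).2‖]

lemma volume_innerCylinder (hδ : 0 < δ) :
    volume (innerCylinder m δ) =
      ENNReal.ofReal (δ ^ m / 4) * volume (ball (0 : EuclideanSpace ℝ (Fin m)) 1) := by
  rw [innerCylinder, headTailEquiv.volume_preimage_prod measurableSet_Ioo measurableSet_ball,
    Real.volume_Ioo, Measure.addHaar_ball_of_pos _ _ hδ, finrank_euclideanSpace_fin, ← mul_assoc,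
    ← ENNReal.ofReal_mul (by norm_num)]
  ring_nf

lemma volume_capCylinder (hδ : 0 ≤ δ) :
    volume (capCylinder m δ) = ENNReal.ofReal (8 * δ ^ 2 * (4 * δ) ^ m) *
      volume (ball (0 : EuclideanSpace ℝ (Fin m)) 1) := by
  rw [capCylinder, headTailEquiv.volume_preimage_prod measurableSet_Icc measurableSet_closedBall,
    Real.volume_Icc, sub_sub_cancel, Measure.addHaar_closedBall _ _ (by positivity),
    finrank_euclideanSpace_fin, ← mul_assoc, ← ENNReal.ofReal_mul (by positivity)]

lemma le_of_mul_volume_cylinder_le {lam M : ℝ} (hlam : 0 ≤ lam) (hM : 0 ≤ M) (hδ : 0 < δ)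
    (h : ENNReal.ofReal lam * volume (innerCylinder m δ) ≤
      ENNReal.ofReal M * volume (capCylinder m δ)) :
    lam ≤ 32 * M * 4 ^ m * δ ^ 2 := by
  have hV₀ : volume (ball (0 : EuclideanSpace ℝ (Fin m)) 1) ≠ 0 :=
    (measure_ball_pos _ _ one_pos).ne'
  rw [volume_innerCylinder hδ, volume_capCylinder hδ.le, ← mul_assoc, ← mul_assoc,
    ← ENNReal.ofReal_mul (by positivity), ENNReal.mul_le_mul_iff_left hV₀ measure_ball_lt_top.ne,
    ← ENNReal.ofReal_mul hM, ENNReal.ofReal_le_ofReal_iff (by positivity)] at h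
  have hδm : 0 < δ ^ m := pow_pos hδ m
  have : lam * δ ^ m ≤ (32 * M * 4 ^ m * δ ^ 2) * δ ^ m := by
    rw [mul_pow] at h; linarith
  exact le_of_mul_le_mul_right this hδm

end Cylinders

theorem stmt11_general (d : ℕ) (hd : 1 ≤ d)
    (p : EuclideanSpace ℝ (Fin d) → ℝ)
    (P : Measure (EuclideanSpace ℝ (Fin d)))
    (hP : P = volume.withDensity fun y => ENNReal.ofReal (p y))
    (lam : ℝ) (hlam : 0 < lam)
    (hplow : ∀ᵐ y ∂(volume : Measure (EuclideanSpace ℝ (Fin d))),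
      y ∈ ball (0 : EuclideanSpace ℝ (Fin d)) 1 → lam ≤ p y)
    (qhat : EuclideanSpace ℝ (Fin d)) (hqhat : ‖qhat‖ = 1) :
    ¬ ∃ T : EuclideanSpace ℝ (Fin d) → EuclideanSpace ℝ (Fin d),
        Measurable T ∧ Measure.map T P = unifBall d ∧
        ∀ᵐ y ∂P, 0 ≤ ⟪T y - qhat, y⟫ := by
  rintro ⟨T, hT, hTP, hTmono⟩
  obtain ⟨m, rfl⟩ : ∃ m, d = m + 1 := ⟨d - 1, by omega⟩
  obtain ⟨e, he⟩ := exists_linearIsometryEquiv_apply_eq_single (by simp) (0 : Fin (m + 1)) hqhat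
  set M := (sphereArea (m + 1))⁻¹ / (1 / 2) ^ m
  have hM : 0 ≤ M := div_nonneg (inv_nonneg.2 ENNReal.toReal_nonneg) (by positivity)
  obtain ⟨δ, hδ₀, hδ, hδlam⟩ :=
    exists_pos_le_mul_sq_lt (by positivity : 0 ≤ 32 * M * 4 ^ m) hlam
      (by norm_num : (0 : ℝ) < 1 / 4) (by norm_num)
  have hA := e.continuous.measurable (measurableSet_innerCylinder (m := m) (δ := δ))
  have hN := e.continuous.measurable (measurableSet_capCylinder (m := m) (δ := δ))
  have hmass : ENNReal.ofReal lam * volume (innerCylinder m δ) ≤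
      ENNReal.ofReal M * volume (capCylinder m δ) :=
    calc ENNReal.ofReal lam * volume (innerCylinder m δ)
        = ENNReal.ofReal lam * volume (e ⁻¹' innerCylinder m δ) := by
          rw [e.measurePreserving.measure_preimage measurableSet_innerCylinder.nullMeasurableSet]
      _ ≤ P (e ⁻¹' innerCylinder m δ) := by
          rw [hP]
          refine mul_measure_le_withDensity_apply hA
            (hplow.mono fun y hy hyA => ENNReal.ofReal_le_ofReal (hy ?_))
          simpa using innerCylinder_subset_ball (by linarith) hyA
      _ ≤ P.map T (e ⁻¹' capCylinder m δ) := by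
          refine measure_le_map_apply_of_ae_mapsTo hT hN ?_
          filter_upwards [ae_of_ae_map hT.aemeasurable (hTP ▸ ae_mem_ball_unifBall _), hTmono]
            with y hTy hy hyA
          refine mem_capCylinder_of_inner_sub_single_nonneg hyA
            (by simpa using (mem_ball_zero_iff.1 hTy).le) ?_
          rwa [← he, ← map_sub, LinearIsometryEquiv.inner_map_map]
      _ ≤ ENNReal.ofReal M * volume (e ⁻¹' capCylinder m δ) := by
          rw [hTP]
          exact unifBall_le_mul_volume (by norm_num) hN fun x hx => by
            simpa using capCylinder_subset_setOf_le_norm hδ₀.le hδ hx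
      _ = ENNReal.ofReal M * volume (capCylinder m δ) := by
          rw [e.measurePreserving.measure_preimage measurableSet_capCylinder.nullMeasurableSet]
  exact hδlam.not_ge (le_of_mul_volume_cylinder_le hlam.le hM hδ₀ hmass)

/-- If `p ≥ λ > 0` a.e. on `B_1` and `|q̂| = 1`, there is no Borel map `T`
pushing `P` forward to `U_d` with `⟨T(y) − q̂, y⟩ ≥ 0` for `P`-a.e. `y`. -/
theorem stmt11 (d : ℕ) (hd : 1 ≤ d)
    (p : EuclideanSpace ℝ (Fin d) → ℝ)
    (P : Measure (EuclideanSpace ℝ (Fin d))) [IsProbabilityMeasure P]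
    (hP : P = volume.withDensity fun y => ENNReal.ofReal (p y))
    (lam : ℝ) (hlam : 0 < lam)
    (hplow : ∀ᵐ y ∂(volume : Measure (EuclideanSpace ℝ (Fin d))),
      y ∈ ball (0 : EuclideanSpace ℝ (Fin d)) 1 → lam ≤ p y)
    (qhat : EuclideanSpace ℝ (Fin d)) (hqhat : ‖qhat‖ = 1) :
    ¬ ∃ T : EuclideanSpace ℝ (Fin d) → EuclideanSpace ℝ (Fin d),
        Measurable T ∧ Measure.map T P = unifBall d ∧
        ∀ᵐ y ∂P, 0 ≤ ⟪T y - qhat, y⟫ :=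
  stmt11_general d hd p P hP lam hlam hplow qhat hqhat
end

section
/- For every c > 0 there exists a constant c' > 0 such that for every real number y_2 with 0 < |y_2| ≤ 1/2 one has sup_{s ∈ [−1/4, 1/4]} ( s·y_2 − |s|·e^{−c/|s|} ) ≥ c' · |y_2| / |log|y_2||, where by convention |s|·e^{−c/|s|} = 0 when s = 0. -/
open Set

/-- For every `c > 0` there is `c' > 0` such that for `0 < |y₂| ≤ 1/2`,
`sup_{|s| ≤ 1/4} (s·y₂ − |s|·e^{−c/|s|}) ≥ c'·|y₂|/|log|y₂||`. (In Lean, `-c/|0| = 0`, so the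
convention that the term vanishes at `s = 0` holds automatically.) -/
theorem stmt15 (c : ℝ) (hc : 0 < c) :
    ∃ c' : ℝ, 0 < c' ∧
      ∀ y₂ : ℝ, y₂ ≠ 0 → |y₂| ≤ 1 / 2 →
        c' * |y₂| / |Real.log (|y₂|)| ≤
          sSup ((fun s : ℝ => s * y₂ - |s| * Real.exp (-c / |s|)) ''
            Set.Icc (-(1/4) : ℝ) (1/4)) := by
  have hlog2 : 0 < Real.log 2 := Real.log_pos one_lt_two
  have hmpos : 0 < min (Real.log 2 / 2) c := lt_min (by linarith) hc
  refine ⟨min (Real.log 2 / 2) c / 4, by positivity, ?_⟩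
  intro y₂ hy hy2
  set a := |y₂| with ha_def
  have ha : 0 < a := abs_pos.mpr hy
  have hla : Real.log a ≤ -Real.log 2 := by
    have h := Real.log_le_log ha hy2
    rwa [show (1:ℝ)/2 = 2⁻¹ by norm_num, Real.log_inv] at h
  set L := -Real.log a with hL_def
  have hL : Real.log 2 ≤ L := by simp only [hL_def]; linarith
  have hLpos : 0 < L := lt_of_lt_of_le hlog2 hL
  have habs : |Real.log a| = L := abs_of_neg (by linarith : Real.log a < 0)
  set t := min (1/4 : ℝ) (c / (Real.log 2 + L)) with ht_def
  have htpos : 0 < t := lt_min (by norm_num) (div_pos hc (by linarith))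
  have ht4 : t ≤ 1/4 := min_le_left _ _
  have htc : Real.log 2 + L ≤ c / t := by
    have h1 : t ≤ c / (Real.log 2 + L) := min_le_right _ _
    rw [le_div_iff₀ htpos]
    calc (Real.log 2 + L) * t ≤ (Real.log 2 + L) * (c / (Real.log 2 + L)) :=
          mul_le_mul_of_nonneg_left h1 (by linarith)
      _ = c := mul_div_cancel₀ _ (by linarith)
  have hexp : Real.exp (-c / t) ≤ a / 2 := by
    calc Real.exp (-c/t) ≤ Real.exp (-(Real.log 2 + L)) := by
          apply Real.exp_le_exp.mpr
          rw [neg_div]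
          linarith
      _ = a / 2 := by
          rw [neg_add, Real.exp_add, Real.exp_neg, Real.exp_log two_pos, hL_def, neg_neg,
            Real.exp_log ha]
          ring
  set s₀ := if 0 < y₂ then t else -t with hs₀
  have hs₀abs : |s₀| = t := by
    rw [hs₀]
    split
    · exact abs_of_pos htpos
    · rw [abs_neg]; exact abs_of_pos htpos
  have hs₀mul : s₀ * y₂ = t * a := by
    rw [hs₀]
    split
    · rw [ha_def, abs_of_pos ‹0 < y₂›]
    · have hneg : y₂ < 0 := lt_of_le_of_ne (not_lt.mp ‹_›) hy
      rw [ha_def, abs_of_neg hneg]; ring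
  have hmem : s₀ ∈ Set.Icc (-(1/4):ℝ) (1/4) := by
    have h := abs_le.mp (hs₀abs ▸ ht4)
    exact Set.mem_Icc.mpr ⟨h.1, h.2⟩
  have hbdd : BddAbove ((fun s : ℝ => s * y₂ - |s| * Real.exp (-c / |s|)) ''
      Set.Icc (-(1/4):ℝ) (1/4)) := by
    refine ⟨1/8, ?_⟩
    rintro z ⟨s, hs, rfl⟩
    have h1 : |s| ≤ 1/4 := abs_le.mpr ⟨hs.1, hs.2⟩
    have h2 : s * y₂ ≤ 1/8 := by
      calc s * y₂ ≤ |s * y₂| := le_abs_self _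
        _ = |s| * |y₂| := abs_mul _ _
        _ ≤ (1/4) * (1/2) := mul_le_mul h1 hy2 (abs_nonneg _) (by norm_num)
        _ = 1/8 := by norm_num
    have h3 : 0 ≤ |s| * Real.exp (-c/|s|) := by positivity
    simp only []
    linarith
  clear_value s₀ t L a
  have hle : min (Real.log 2 / 2) c / 4 * a / |Real.log a| ≤
      s₀ * y₂ - |s₀| * Real.exp (-c / |s₀|) := by
    rw [habs, hs₀abs, hs₀mul]
    have hm : min (Real.log 2 / 2) c ≤ Real.log 2 / 2 := min_le_left _ _
    have hmc : min (Real.log 2 / 2) c ≤ c := min_le_right _ _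
    set m := min (Real.log 2 / 2) c with hm_def
    clear_value m
    have htm : m / (2*L) ≤ t := by
      rw [ht_def]
      apply le_min
      · rw [div_le_iff₀ (by linarith)]; nlinarith
      · rw [div_le_div_iff₀ (by linarith) (by linarith)]; nlinarith
    have htm' : m ≤ t * (2*L) := (div_le_iff₀ (by linarith)).mp htm
    have hstep : t * a / 2 ≤ t * a - t * Real.exp (-c/t) := by nlinarith
    have h5 : m / 4 * a / L ≤ t * a / 2 := by
      rw [div_le_iff₀ hLpos]
      linarith [mul_le_mul_of_nonneg_right htm' ha.le]
    linarith
  calc min (Real.log 2 / 2) c / 4 * a / |Real.log a| ≤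
        s₀ * y₂ - |s₀| * Real.exp (-c / |s₀|) := hle
    _ ≤ _ := le_csSup hbdd ⟨s₀, hmem, rfl⟩
end

section
/- There do not exist constants λ > 0 and c > 0 together with a function ψ : R^2 → R that is convex, 1-Lipschitz, of class C^2 on the open strip (−1,1) × (0,1), and satisfies, for every point (y_1, y_2) with |y_1| < 1 and 0 < y_2 ≤ 1/2: (i) 0 ≤ ψ(y_1, y_2) ≤ y_2; (ii) det D^2ψ(y_1, y_2) ≥ λ |∇ψ(y_1, y_2)|; and (iii) |∇ψ(y_1, y_2)| ≥ c / |log y_2|. -/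
/-!
On the horizontal segment at height `s`, convexity and `0 ≤ ψ ≤ s` bound `∂₁ψ(±1/2, s)` by `4s`,
so `∫ ∂₁₁ψ dx ≤ 8s` over `[-1/2, 1/2]`. As `∂₁₁ψ ≥ 0` and `∂₁₁ψ ∂₂₂ψ ≥ det D²ψ ≥ D := λc / |log s|`,
replacing `D / ∂₁₁ψ ≤ ∂₂₂ψ` by the tangent line of `a ↦ D / a` at `a = 8s` and integrating gives
`∫ ∂₂₂ψ dx ≥ λc / (8 s |log s|)`, whose integral over `s ∈ [t, 1/2]` grows like `log |log t|`.
Integrating `∂₂₂ψ` vertically instead gives `∂₂ψ(x, 1/2) - ∂₂ψ(x, t) ≤ 2` since `ψ` is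
1-Lipschitz, so Fubini on the rectangle yields a contradiction as `t → 0`.
-/

open Set Filter Topology MeasureTheory Real

section Calculus

variable {E : Type*} [NormedAddCommGroup E] [NormedSpace ℝ E] {f : E → ℝ}

lemma hasDerivAt_add_smul (y v : E) (t : ℝ) : HasDerivAt (fun s : ℝ => y + s • v) v t := by
  simpa using ((hasDerivAt_id t).smul_const v).const_add y

lemma hasDerivAt_fderiv_comp_apply {γ : ℝ → E} {v : E} {t : ℝ} (hγ : HasDerivAt γ v t)
    (hf : DifferentiableAt ℝ (fderiv ℝ f) (γ t)) (w : E) :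
    HasDerivAt (fun s => fderiv ℝ f (γ s) w) (fderiv ℝ (fderiv ℝ f) (γ t) v w) t :=
  (ContinuousLinearMap.apply ℝ ℝ w).hasFDerivAt.comp_hasDerivAt t
    (hf.hasFDerivAt.comp_hasDerivAt t hγ)

lemma ContDiffAt.differentiableAt_fderiv {x : E} (hf : ContDiffAt ℝ 2 f x) :
    DifferentiableAt ℝ (fderiv ℝ f) x :=
  (hf.fderiv_right (m := 1) le_rfl).differentiableAt one_ne_zero

lemma ContDiffAt.continuousAt_fderiv_fderiv {x : E} (hf : ContDiffAt ℝ 2 f x) :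
    ContinuousAt (fderiv ℝ (fderiv ℝ f)) x :=
  ((hf.fderiv_right (m := 1) le_rfl).fderiv_right (m := 0) le_rfl).continuousAt

lemma ConvexOn.comp_add_smul (hf : ConvexOn ℝ univ f) (y v : E) :
    ConvexOn ℝ univ (fun t : ℝ => f (y + t • v)) := by
  exact (hf.translate_right y).comp_linearMap (LinearMap.toSpanSingleton ℝ E v)

lemma ConvexOn.fderiv_apply_le_sub (hf : ConvexOn ℝ univ f) {y : E}
    (hd : DifferentiableAt ℝ f y) (v : E) : fderiv ℝ f y v ≤ f (y + v) - f y := by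
  have := (hf.comp_add_smul y v).le_slope_of_hasDerivAt (mem_univ 0) (mem_univ 1) one_pos
    ((by simpa using hd : DifferentiableAt ℝ f (y + (0 : ℝ) • v)).hasFDerivAt.comp_hasDerivAt 0
      (hasDerivAt_add_smul y v 0))
  simpa [slope_def_field] using this

lemma ConvexOn.fderiv_fderiv_apply_self_nonneg (hf : ConvexOn ℝ univ f) {y : E}
    (hf2 : ContDiffAt ℝ 2 f y) (v : E) : 0 ≤ fderiv ℝ (fderiv ℝ f) y v v := by
  set S := {t : ℝ | DifferentiableAt ℝ f (y + t • v)}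
  have hS : S ∈ 𝓝 0 := by
    have := (hasDerivAt_add_smul y v 0).continuousAt.tendsto
    simp only [zero_smul, add_zero] at this
    exact this.eventually
      ((hf2.eventually (by simp)).mono fun z hz => hz.differentiableAt two_ne_zero)
  have hmono : MonotoneOn (fun t => fderiv ℝ f (y + t • v) v) S := by
    intro t₁ h₁ t₂ h₂ hle
    rcases hle.eq_or_lt with rfl | hlt
    · rfl
    have hderiv : ∀ t ∈ S, HasDerivAt (fun t => f (y + t • v)) (fderiv ℝ f (y + t • v) v) t :=
      fun t ht => ht.hasFDerivAt.comp_hasDerivAt t (hasDerivAt_add_smul y v t)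
    have hg := hf.comp_add_smul y v
    exact (hg.le_slope_of_hasDerivAt trivial trivial hlt (hderiv t₁ h₁)).trans
      (hg.slope_le_of_hasDerivAt trivial trivial hlt (hderiv t₂ h₂))
  have hacc : AccPt (0 : ℝ) (𝓟 S) := by
    simpa using (PerfectSpace.univ_preperfect 0 (mem_univ _)).nhds_inter hS
  have hd := hasDerivAt_fderiv_comp_apply (hasDerivAt_add_smul y v 0)
    (by simpa using hf2.differentiableAt_fderiv) v
  simp only [zero_smul, add_zero] at hd
  exact hd.hasDerivWithinAt.nonneg_of_monotoneOn hacc hmono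

lemma continuousOn_fderiv_fderiv_comp {X : Type*} [TopologicalSpace X] {Γ : X → E}
    (hΓ : Continuous Γ) {K : Set X} (hf : ∀ q ∈ K, ContDiffAt ℝ 2 f (Γ q)) (v w : E) :
    ContinuousOn (fun q => fderiv ℝ (fderiv ℝ f) (Γ q) v w) K := fun q hq =>
  ((((hf q hq).continuousAt_fderiv_fderiv.comp hΓ.continuousAt).clm_apply
    continuousAt_const).clm_apply continuousAt_const).continuousWithinAt

lemma integral_fderiv_fderiv_comp_eq_sub {γ : ℝ → E} {v : E} (hγ : ∀ t, HasDerivAt γ v t)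
    {a b : ℝ} (hf : ∀ t ∈ uIcc a b, ContDiffAt ℝ 2 f (γ t)) (w : E) :
    ∫ t in a..b, fderiv ℝ (fderiv ℝ f) (γ t) v w = fderiv ℝ f (γ b) w - fderiv ℝ f (γ a) w :=
  intervalIntegral.integral_eq_sub_of_hasDerivAt
    (fun t ht => hasDerivAt_fderiv_comp_apply (hγ t) (hf t ht).differentiableAt_fderiv w)
    (continuousOn_fderiv_fderiv_comp (continuous_iff_continuousAt.2 fun t => (hγ t).continuousAt)
      hf v w).intervalIntegrable

lemma LipschitzWith.abs_fderiv_apply_le {K : NNReal} (hf : LipschitzWith K f) (y v : E) :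
    |fderiv ℝ f y v| ≤ K * ‖v‖ :=
  ((fderiv ℝ f y).le_opNorm v).trans
    (mul_le_mul_of_nonneg_right (norm_fderiv_le_of_lipschitz ℝ hf) (norm_nonneg v))

end Calculus

/-- The left side is the tangent line at `a = m` of the convex function `a ↦ D / a`. -/
lemma two_mul_div_sub_le_of_le_mul {D a b m : ℝ} (hD : 0 < D) (ha : 0 ≤ a) (hm : 0 < m)
    (h : D ≤ a * b) : 2 * D / m - D / m ^ 2 * a ≤ b := by
  have ha' : 0 < a := ha.lt_of_ne (by rintro rfl; linarith)
  rw [show 2 * D / m - D / m ^ 2 * a = (2 * m - a) * D / m ^ 2 by field_simp,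
    div_le_iff₀ (by positivity)]
  nlinarith [mul_nonneg hD.le (sq_nonneg (a - m))]

lemma intervalIntegrable_inv_mul_neg_log {t u : ℝ} (ht0 : 0 < t) (ht1 : t < 1) (hu0 : 0 < u)
    (hu1 : u < 1) : IntervalIntegrable (fun s => (s * -log s)⁻¹) volume t u := by
  refine ContinuousOn.intervalIntegrable fun s hs => ContinuousAt.continuousWithinAt ?_
  have hs0 : 0 < s := (lt_min ht0 hu0).trans_le hs.1
  have hlog : 0 < -log s := neg_pos.2 (log_neg hs0 (hs.2.trans_lt (max_lt ht1 hu1)))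
  exact (continuousAt_id.mul (continuousAt_log hs0.ne').neg).inv₀ (mul_pos hs0 hlog).ne'

lemma integral_inv_mul_neg_log {t u : ℝ} (ht0 : 0 < t) (ht1 : t < 1) (hu0 : 0 < u) (hu1 : u < 1) :
    ∫ s in t..u, (s * -log s)⁻¹ = log (-log t) - log (-log u) := by
  have hderiv : ∀ s ∈ uIcc t u, HasDerivAt (fun s => -log (-log s)) (s * -log s)⁻¹ s := by
    intro s hs
    have hs0 : 0 < s := (lt_min ht0 hu0).trans_le hs.1
    have hlog : 0 < -log s := neg_pos.2 (log_neg hs0 (hs.2.trans_lt (max_lt ht1 hu1)))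
    have h : HasDerivAt (fun s => -log (-log s)) (-(-s⁻¹ / -log s)) s :=
      ((hasDerivAt_log hs0.ne').neg.log hlog.ne').neg
    convert h using 1
    field_simp
  rw [intervalIntegral.integral_eq_sub_of_hasDerivAt hderiv
    (intervalIntegrable_inv_mul_neg_log ht0 ht1 hu0 hu1)]
  ring

lemma tendsto_log_neg_log_nhdsGT_zero : Tendsto (fun t => log (-log t)) (𝓝[>] 0) atTop :=
  tendsto_log_atTop.comp (tendsto_neg_atBot_atTop.comp tendsto_log_nhdsGT_zero)

lemma integrable_prod_restrict_Ioc {F : ℝ → ℝ → ℝ} {a b c d : ℝ}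
    (hF : ContinuousOn (Function.uncurry F) (Icc a b ×ˢ Icc c d)) :
    Integrable (Function.uncurry F)
      ((volume.restrict (Ioc a b)).prod (volume.restrict (Ioc c d))) := by
  rw [Measure.prod_restrict, ← Measure.volume_eq_prod]
  exact (hF.integrableOn_compact (isCompact_Icc.prod isCompact_Icc)).mono_set
    (prod_mono Ioc_subset_Icc_self Ioc_subset_Icc_self)

local notation "E²" => EuclideanSpace ℝ (Fin 2)
local notation "e₀" => EuclideanSpace.single (0 : Fin 2) (1 : ℝ)
local notation "e₁" => EuclideanSpace.single (1 : Fin 2) (1 : ℝ)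

noncomputable def pt (a b : ℝ) : E² := a • e₀ + b • e₁

@[simp] lemma pt_apply_zero (a b : ℝ) : pt a b 0 = a := by simp [pt]

@[simp] lemma pt_apply_one (a b : ℝ) : pt a b 1 = b := by simp [pt]

lemma pt_add_smul_e₀ (a b t : ℝ) : pt a b + t • e₀ = pt (a + t) b := by
  simp only [pt, add_smul]; abel

lemma continuous_pt : Continuous fun q : ℝ × ℝ => pt q.1 q.2 := by
  unfold pt; fun_prop

lemma hasDerivAt_pt_fst (a b : ℝ) : HasDerivAt (fun x => pt x b) e₀ a := by
  simpa [pt] using ((hasDerivAt_id a).smul_const e₀).add_const (b • e₁)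

lemma hasDerivAt_pt_snd (a b : ℝ) : HasDerivAt (fun y => pt a y) e₁ b := by
  simpa [pt] using ((hasDerivAt_id b).smul_const e₁).const_add (a • e₀)

lemma isOpen_strip : IsOpen {y : E² | y 0 ∈ Ioo (-1 : ℝ) 1 ∧ y 1 ∈ Ioo (0 : ℝ) 1} :=
  (isOpen_Ioo.preimage (EuclideanSpace.proj 0).continuous).inter
    (isOpen_Ioo.preimage (EuclideanSpace.proj 1).continuous)

lemma abs_lt_one_of_mem_uIcc_half {x : ℝ} (hx : x ∈ uIcc (-1 / 2 : ℝ) (1 / 2)) : |x| < 1 := by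
  rw [uIcc_of_le (by norm_num)] at hx
  exact abs_lt.2 ⟨by linarith [hx.1], by linarith [hx.2]⟩

section Plane

variable {ψ : E² → ℝ}

lemma integral_fderiv_fderiv_pt_e₀_le
    (hψ : ∀ a b, |a| < 1 → 0 < b → b ≤ 1 / 2 → ContDiffAt ℝ 2 ψ (pt a b))
    (hconv : ConvexOn ℝ univ ψ)
    (hbound : ∀ a b, |a| < 1 → 0 < b → b ≤ 1 / 2 → 0 ≤ ψ (pt a b) ∧ ψ (pt a b) ≤ b)
    {s : ℝ} (hs0 : 0 < s) (hs : s ≤ 1 / 2) :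
    ∫ x in (-1 / 2 : ℝ)..1 / 2, fderiv ℝ (fderiv ℝ ψ) (pt x s) e₀ e₀ ≤ 8 * s := by
  rw [integral_fderiv_fderiv_comp_eq_sub (hasDerivAt_pt_fst · s)
    (fun x hx => hψ x s (abs_lt_one_of_mem_uIcc_half hx) hs0 hs)]
  have hright := hconv.fderiv_apply_le_sub
    ((hψ (1 / 2) s (by norm_num [abs_of_pos]) hs0 hs).differentiableAt two_ne_zero)
    ((1 / 4 : ℝ) • e₀)
  have hleft := hconv.fderiv_apply_le_sub
    ((hψ (-1 / 2) s (by norm_num [abs_of_neg]) hs0 hs).differentiableAt two_ne_zero)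
    ((-1 / 4 : ℝ) • e₀)
  rw [map_smul, smul_eq_mul, pt_add_smul_e₀, show (1 / 2 : ℝ) + 1 / 4 = 3 / 4 by norm_num]
    at hright
  rw [map_smul, smul_eq_mul, pt_add_smul_e₀, show (-1 / 2 : ℝ) + -1 / 4 = -3 / 4 by norm_num]
    at hleft
  have h₁ := hbound (3 / 4) s (by norm_num [abs_of_pos]) hs0 hs
  have h₂ := hbound (1 / 2) s (by norm_num [abs_of_pos]) hs0 hs
  have h₃ := hbound (-3 / 4) s (by norm_num [abs_of_neg]) hs0 hs
  have h₄ := hbound (-1 / 2) s (by norm_num [abs_of_neg]) hs0 hs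
  linarith [h₁.1, h₁.2, h₂.1, h₂.2, h₃.1, h₃.2, h₄.1, h₄.2]

lemma integral_fderiv_fderiv_pt_e₁_le_two
    (hψ : ∀ a b, |a| < 1 → 0 < b → b ≤ 1 / 2 → ContDiffAt ℝ 2 ψ (pt a b))
    (hlip : LipschitzWith 1 ψ) {a t : ℝ} (ha : |a| < 1) (ht0 : 0 < t) (ht : t ≤ 1 / 2) :
    ∫ s in t..1 / 2, fderiv ℝ (fderiv ℝ ψ) (pt a s) e₁ e₁ ≤ 2 := by
  rw [integral_fderiv_fderiv_comp_eq_sub (hasDerivAt_pt_snd a) fun s hs => by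
    rw [uIcc_of_le ht] at hs; exact hψ a s ha (ht0.trans_le hs.1) hs.2]
  have h₁ := hlip.abs_fderiv_apply_le (pt a (1 / 2)) e₁
  have h₂ := hlip.abs_fderiv_apply_le (pt a t) e₁
  simp only [PiLp.norm_single, norm_one, NNReal.coe_one, mul_one] at h₁ h₂
  linarith [abs_le.1 h₁, abs_le.1 h₂]

lemma div_le_integral_fderiv_fderiv_pt_e₁
    (hψ : ∀ a b, |a| < 1 → 0 < b → b ≤ 1 / 2 → ContDiffAt ℝ 2 ψ (pt a b))
    (hconv : ConvexOn ℝ univ ψ)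
    (hbound : ∀ a b, |a| < 1 → 0 < b → b ≤ 1 / 2 → 0 ≤ ψ (pt a b) ∧ ψ (pt a b) ≤ b)
    {s D : ℝ} (hs0 : 0 < s) (hs : s ≤ 1 / 2) (hD : 0 < D)
    (hdet : ∀ x, |x| < 1 →
      D ≤ fderiv ℝ (fderiv ℝ ψ) (pt x s) e₀ e₀ * fderiv ℝ (fderiv ℝ ψ) (pt x s) e₁ e₁) :
    D / (8 * s) ≤ ∫ x in (-1 / 2 : ℝ)..1 / 2, fderiv ℝ (fderiv ℝ ψ) (pt x s) e₁ e₁ := by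
  have hψs : ∀ x ∈ uIcc (-1 / 2 : ℝ) (1 / 2), ContDiffAt ℝ 2 ψ (pt x s) := fun x hx =>
    hψ x s (abs_lt_one_of_mem_uIcc_half hx) hs0 hs
  have hint : ∀ v, IntervalIntegrable (fun x => fderiv ℝ (fderiv ℝ ψ) (pt x s) v v) volume
      (-1 / 2) (1 / 2) := fun v =>
    (continuousOn_fderiv_fderiv_comp (continuous_pt.comp (Continuous.prodMk_left s)) hψs v
      v).intervalIntegrable
  set m := 8 * s
  have hm : 0 < m := by positivity
  have hpt : ∀ x ∈ Icc (-1 / 2 : ℝ) (1 / 2), 2 * D / m - D / m ^ 2 *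
      fderiv ℝ (fderiv ℝ ψ) (pt x s) e₀ e₀ ≤ fderiv ℝ (fderiv ℝ ψ) (pt x s) e₁ e₁ := by
    intro x hx
    rw [← uIcc_of_le (by norm_num)] at hx
    exact two_mul_div_sub_le_of_le_mul hD
      (hconv.fderiv_fderiv_apply_self_nonneg (hψs x hx) e₀) hm
      (hdet x (abs_lt_one_of_mem_uIcc_half hx))
  calc D / m = 2 * D / m - D / m ^ 2 * m := by field_simp; ring
    _ ≤ 2 * D / m - D / m ^ 2 *
        ∫ x in (-1 / 2 : ℝ)..1 / 2, fderiv ℝ (fderiv ℝ ψ) (pt x s) e₀ e₀ := by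
      gcongr; exact integral_fderiv_fderiv_pt_e₀_le hψ hconv hbound hs0 hs
    _ = ∫ x in (-1 / 2 : ℝ)..1 / 2,
        (2 * D / m - D / m ^ 2 * fderiv ℝ (fderiv ℝ ψ) (pt x s) e₀ e₀) := by
      rw [intervalIntegral.integral_sub intervalIntegrable_const ((hint e₀).const_mul _),
        intervalIntegral.integral_const_mul, intervalIntegral.integral_const]
      norm_num
    _ ≤ _ := intervalIntegral.integral_mono_on (by norm_num)
      (intervalIntegrable_const.sub ((hint e₀).const_mul _)) (hint e₁) hpt

lemma log_neg_log_le
    (hψ : ∀ a b, |a| < 1 → 0 < b → b ≤ 1 / 2 → ContDiffAt ℝ 2 ψ (pt a b))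
    (hconv : ConvexOn ℝ univ ψ) (hlip : LipschitzWith 1 ψ)
    (hbound : ∀ a b, |a| < 1 → 0 < b → b ≤ 1 / 2 → 0 ≤ ψ (pt a b) ∧ ψ (pt a b) ≤ b)
    {K : ℝ} (hK : 0 < K)
    (hdet : ∀ a b, |a| < 1 → 0 < b → b ≤ 1 / 2 →
      K / -log b ≤ fderiv ℝ (fderiv ℝ ψ) (pt a b) e₀ e₀ * fderiv ℝ (fderiv ℝ ψ) (pt a b) e₁ e₁)
    {t : ℝ} (ht0 : 0 < t) (ht : t < 1 / 2) :
    log (-log t) ≤ 16 / K + log (log 2) := by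
  set F : ℝ → ℝ → ℝ := fun s x => fderiv ℝ (fderiv ℝ ψ) (pt x s) e₁ e₁
  have hhalf : (-1 / 2 : ℝ) ≤ 1 / 2 := by norm_num
  have hF : Integrable (Function.uncurry F)
      ((volume.restrict (Ioc t (1 / 2))).prod (volume.restrict (Ioc (-1 / 2) (1 / 2)))) :=
    integrable_prod_restrict_Ioc <| continuousOn_fderiv_fderiv_comp
      (continuous_pt.comp continuous_swap) (fun q hq => hψ q.2 q.1
        (abs_lt_one_of_mem_uIcc_half (by rw [uIcc_of_le hhalf]; exact hq.2))
        (ht0.trans_le hq.1.1) hq.1.2) e₁ e₁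
  have hrow : ∀ s ∈ Icc t (1 / 2),
      K / 8 * (s * -log s)⁻¹ ≤ ∫ x in (-1 / 2 : ℝ)..1 / 2, F s x := by
    intro s hs
    have hs0 := ht0.trans_le hs.1
    have hlog : 0 < -log s := neg_pos.2 (log_neg hs0 (by linarith [hs.2]))
    convert div_le_integral_fderiv_fderiv_pt_e₁ hψ hconv hbound hs0 hs.2 (div_pos hK hlog)
      (fun x hx => hdet x s hx hs0 hs.2) using 1
    field_simp
  have hcol : ∀ x ∈ Ioc (-1 / 2 : ℝ) (1 / 2), ∫ s in Ioc t (1 / 2), F s x ≤ 2 := fun x hx => by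
    rw [← intervalIntegral.integral_of_le ht.le]
    exact integral_fderiv_fderiv_pt_e₁_le_two hψ hlip
      (abs_lt_one_of_mem_uIcc_half (by rw [uIcc_of_le hhalf]; exact Ioc_subset_Icc_self hx))
      ht0 ht.le
  have hlog2 : -log (1 / 2 : ℝ) = log 2 := by rw [one_div, log_inv, neg_neg]
  have key : K / 8 * (log (-log t) - log (log 2)) ≤ 2 := calc
    K / 8 * (log (-log t) - log (log 2)) = ∫ s in t..1 / 2, K / 8 * (s * -log s)⁻¹ := by
      rw [intervalIntegral.integral_const_mul,
        integral_inv_mul_neg_log ht0 (by linarith) (by norm_num) (by norm_num), hlog2]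
    _ ≤ ∫ s in t..1 / 2, ∫ x in (-1 / 2 : ℝ)..1 / 2, F s x := by
      refine intervalIntegral.integral_mono_on ht.le ((intervalIntegrable_inv_mul_neg_log ht0
        (by linarith) (by norm_num) (by norm_num)).const_mul _) ?_ hrow
      rw [intervalIntegrable_iff_integrableOn_Ioc_of_le ht.le]
      simp_rw [intervalIntegral.integral_of_le hhalf]
      exact hF.integral_prod_left
    _ = ∫ x in Ioc (-1 / 2 : ℝ) (1 / 2), ∫ s in Ioc t (1 / 2), F s x := by
      simp_rw [intervalIntegral.integral_of_le ht.le, intervalIntegral.integral_of_le hhalf]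
      exact integral_integral_swap hF
    _ ≤ ∫ x in Ioc (-1 / 2 : ℝ) (1 / 2), (2 : ℝ) :=
      setIntegral_mono_on hF.integral_prod_right (integrableOn_const (by simp)) measurableSet_Ioc
        hcol
    _ = 2 := by norm_num
  have : log (-log t) - log (log 2) ≤ 16 / K := by rw [le_div_iff₀ hK]; linarith
  linarith

end Plane

/-- There is no convex, 1-Lipschitz function `ψ : ℝ² → ℝ`, of class `C²`
on the strip `(−1,1) × (0,1)`, satisfying `0 ≤ ψ ≤ y₂`, `det D²ψ ≥ λ|∇ψ|` and
`|∇ψ| ≥ c/|log y₂|` for all `|y₁| < 1`, `0 < y₂ ≤ 1/2`. -/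
theorem stmt16 :
    ¬ ∃ (lam c : ℝ) (ψ : EuclideanSpace ℝ (Fin 2) → ℝ),
      0 < lam ∧ 0 < c ∧
      ConvexOn ℝ Set.univ ψ ∧
      LipschitzWith 1 ψ ∧
      ContDiffOn ℝ 2 ψ
        {y : EuclideanSpace ℝ (Fin 2) | y 0 ∈ Set.Ioo (-1 : ℝ) 1 ∧ y 1 ∈ Set.Ioo (0 : ℝ) 1} ∧
      ∀ y : EuclideanSpace ℝ (Fin 2), |y 0| < 1 → 0 < y 1 → y 1 ≤ 1 / 2 →
        (0 ≤ ψ y ∧ ψ y ≤ y 1) ∧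
        lam * ‖gradient ψ y‖ ≤
          (fderiv ℝ (fun z => fderiv ℝ ψ z) y (EuclideanSpace.single 0 1)
              (EuclideanSpace.single 0 1)) *
            (fderiv ℝ (fun z => fderiv ℝ ψ z) y (EuclideanSpace.single 1 1)
              (EuclideanSpace.single 1 1)) -
          (fderiv ℝ (fun z => fderiv ℝ ψ z) y (EuclideanSpace.single 0 1)
              (EuclideanSpace.single 1 1)) *
            (fderiv ℝ (fun z => fderiv ℝ ψ z) y (EuclideanSpace.single 1 1)
              (EuclideanSpace.single 0 1)) ∧
        c / |Real.log (y 1)| ≤ ‖gradient ψ y‖ := by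
  rintro ⟨lam, c, ψ, hlam, hc, hconv, hlip, hC2, h⟩
  have hψ : ∀ a b, |a| < 1 → 0 < b → b ≤ 1 / 2 → ContDiffAt ℝ 2 ψ (pt a b) :=
    fun a b ha hb0 hb => hC2.contDiffAt <| isOpen_strip.mem_nhds
      ⟨by simpa [abs_lt] using ha, by simp only [pt_apply_one, mem_Ioo]; constructor <;> linarith⟩
  have hpt := fun a b (ha : |a| < 1) (hb0 : 0 < b) (hb : b ≤ 1 / 2) =>
    h (pt a b) (by simpa using ha) (by simpa using hb0) (by simpa using hb)
  have hbound : ∀ a b, |a| < 1 → 0 < b → b ≤ 1 / 2 → 0 ≤ ψ (pt a b) ∧ ψ (pt a b) ≤ b :=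
    fun a b ha hb0 hb => by simpa using (hpt a b ha hb0 hb).1
  have hdet : ∀ a b, |a| < 1 → 0 < b → b ≤ 1 / 2 → lam * c / -log b ≤
      fderiv ℝ (fderiv ℝ ψ) (pt a b) e₀ e₀ * fderiv ℝ (fderiv ℝ ψ) (pt a b) e₁ e₁ := by
    intro a b ha hb0 hb
    obtain ⟨-, hhess, hgrad⟩ := hpt a b ha hb0 hb
    rw [pt_apply_one, abs_of_neg (log_neg hb0 (by linarith))] at hgrad
    rw [(hψ a b ha hb0 hb).isSymmSndFDerivAt (by simp) e₀ e₁] at hhess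
    calc lam * c / -log b = lam * (c / -log b) := by ring
      _ ≤ lam * ‖gradient ψ (pt a b)‖ := by gcongr
      _ ≤ _ := hhess.trans (by nlinarith [sq_nonneg (fderiv ℝ (fderiv ℝ ψ) (pt a b) e₁ e₀)])
  obtain ⟨t, ht, hlarge⟩ := (Filter.Eventually.and (Ioo_mem_nhdsGT (by norm_num : (0 : ℝ) < 1 / 2))
    (tendsto_log_neg_log_nhdsGT_zero.eventually_gt_atTop (16 / (lam * c) + log (log 2)))).exists
  exact hlarge.not_ge (log_neg_log_le hψ hconv hlip hbound (mul_pos hlam hc) hdet ht.1 ht.2)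
end
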